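/- arXiv:2509.24936 — 2 statements merged into one kernel-verified Lean document; each statement's English description precedes it below -/
import Mathlib

section
/- Fix α∈[0,1] and vectors v₀,v₁,u∈ℝ^d; set v̄=(v₀+v₁)/2 and w=v₁−v₀. Define L(x) = α(‖(v₀+x)/2−u‖² + ‖(x+v₁)/2−u‖²) + (1−α)(‖x−v₀‖² + ‖v₁−x‖²). Then for 0<α<1, min over x∈ℝ^d of L(x) equals (8α(1−α)/(4−3α))‖u−v̄‖² + (1/2 − 3α/8)‖w‖², attained at x = (2α/(4−3α))u + ((4−5α)/(4−3α))v̄. -/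
/-!
By the parallelogram law, each of the two pairs of squared norms in the objective is twice the
squared norm at the centre of the pair plus a multiple of `‖v₁ - v₀‖²`. Writing `m` for the
midpoint of `v₀, v₁`, the objective becomes `α/2 ‖(x - m) - 2(u - m)‖² + 2(1 - α) ‖x - m‖²`
plus a multiple of `‖v₁ - v₀‖²`. Completing the square in a weighted sum of two squared distances
turns this into the claimed minimum plus `(4 - 3α)/2 ‖x - x⋆‖²` with `x⋆` the claimed minimizer,
and this term is nonnegative since `α < 1`.
-/

section
variable {E : Type*} [NormedAddCommGroup E] [InnerProductSpace ℝ E]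

theorem mul_norm_sub_sq_add_mul_norm_sub_sq {a b : ℝ} (hab : a + b ≠ 0) (y p q : E) :
    a * ‖y - p‖ ^ 2 + b * ‖y - q‖ ^ 2 =
      (a + b) * ‖y - (a + b)⁻¹ • (a • p + b • q)‖ ^ 2 + a * b / (a + b) * ‖p - q‖ ^ 2 := by
  simp only [← real_inner_self_eq_norm_sq, inner_sub_left, inner_sub_right, inner_add_left,
    inner_add_right, real_inner_smul_left, real_inner_smul_right, real_inner_comm y,
    real_inner_comm p q]
  field_simp
  ring

theorem oat_objective_eq_weighted_sum (α : ℝ) (v₀ v₁ u x : E) :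
    α * (‖(2:ℝ)⁻¹ • (v₀ + x) - u‖ ^ 2 + ‖(2:ℝ)⁻¹ • (x + v₁) - u‖ ^ 2)
      + (1 - α) * (‖x - v₀‖ ^ 2 + ‖v₁ - x‖ ^ 2) =
    α / 2 * ‖(x - (2:ℝ)⁻¹ • (v₀ + v₁)) - (2:ℝ) • (u - (2:ℝ)⁻¹ • (v₀ + v₁))‖ ^ 2
      + 2 * (1 - α) * ‖x - (2:ℝ)⁻¹ • (v₀ + v₁)‖ ^ 2
      + (1 / 2 - 3 * α / 8) * ‖v₁ - v₀‖ ^ 2 := by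
  set m := (2:ℝ)⁻¹ • (v₀ + v₁)
  have h_pred : ‖(2:ℝ)⁻¹ • (x + v₁) - u‖ ^ 2 + ‖(2:ℝ)⁻¹ • (v₀ + x) - u‖ ^ 2
      = 2 * (‖(2:ℝ)⁻¹ • (x - m - (2:ℝ) • (u - m))‖ ^ 2 + ‖(4:ℝ)⁻¹ • (v₁ - v₀)‖ ^ 2) := by
    rw [← parallelogram_law_with_norm ℝ]
    congr 3 <;> simp only [m] <;> module
  have h_dist : ‖x - v₀‖ ^ 2 + ‖v₁ - x‖ ^ 2
      = 2 * (‖(2:ℝ)⁻¹ • (v₁ - v₀)‖ ^ 2 + ‖x - m‖ ^ 2) := by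
    rw [← parallelogram_law_with_norm ℝ]
    congr 3 <;> simp only [m] <;> module
  rw [add_comm (‖(2:ℝ)⁻¹ • (v₀ + x) - u‖ ^ 2), h_pred, h_dist]
  simp only [norm_smul, mul_pow, Real.norm_eq_abs]
  norm_num
  ring

theorem oat_objective_eq_min_add_sq {α : ℝ} (h : 4 - 3 * α ≠ 0) (v₀ v₁ u x : E) :
    α * (‖(2:ℝ)⁻¹ • (v₀ + x) - u‖ ^ 2 + ‖(2:ℝ)⁻¹ • (x + v₁) - u‖ ^ 2)
      + (1 - α) * (‖x - v₀‖ ^ 2 + ‖v₁ - x‖ ^ 2) =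
    8 * α * (1 - α) / (4 - 3 * α) * ‖u - (2:ℝ)⁻¹ • (v₀ + v₁)‖ ^ 2
      + (1 / 2 - 3 * α / 8) * ‖v₁ - v₀‖ ^ 2
      + (4 - 3 * α) / 2 * ‖x - ((2 * α / (4 - 3 * α)) • u
          + ((4 - 5 * α) / (4 - 3 * α)) • ((2:ℝ)⁻¹ • (v₀ + v₁)))‖ ^ 2 := by
  set m := (2:ℝ)⁻¹ • (v₀ + v₁)
  have h_weights : α / 2 + 2 * (1 - α) = (4 - 3 * α) / 2 := by ring
  have h_square := mul_norm_sub_sq_add_mul_norm_sub_sq (a := α / 2) (b := 2 * (1 - α))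
    (by rw [h_weights]; simpa) (x - m) ((2:ℝ) • (u - m)) 0
  have h_centre : x - m - ((4 - 3 * α) / 2)⁻¹ • ((α / 2) • (2:ℝ) • (u - m) + (2 * (1 - α)) • 0)
      = x - ((2 * α / (4 - 3 * α)) • u + ((4 - 5 * α) / (4 - 3 * α)) • m) := by
    match_scalars <;> field_simp <;> ring
  rw [sub_zero, h_weights, h_centre, sub_zero, norm_smul, mul_pow, Real.norm_two] at h_square
  rw [oat_objective_eq_weighted_sum, h_square]
  field_simp
  ring

end

theorem oat_per_sample_min_general
    (d : ℕ) (α : ℝ) (hα₁ : α < 1)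
    (v₀ v₁ u : EuclideanSpace ℝ (Fin d)) :
    (∀ x : EuclideanSpace ℝ (Fin d),
        8 * α * (1 - α) / (4 - 3 * α) * ‖u - (2:ℝ)⁻¹ • (v₀ + v₁)‖ ^ 2
          + (1 / 2 - 3 * α / 8) * ‖v₁ - v₀‖ ^ 2 ≤
        α * (‖(2:ℝ)⁻¹ • (v₀ + x) - u‖ ^ 2 + ‖(2:ℝ)⁻¹ • (x + v₁) - u‖ ^ 2)
          + (1 - α) * (‖x - v₀‖ ^ 2 + ‖v₁ - x‖ ^ 2)) ∧
    (α * (‖(2:ℝ)⁻¹ • (v₀ + ((2 * α / (4 - 3 * α)) • u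
              + ((4 - 5 * α) / (4 - 3 * α)) • ((2:ℝ)⁻¹ • (v₀ + v₁)))) - u‖ ^ 2
          + ‖(2:ℝ)⁻¹ • (((2 * α / (4 - 3 * α)) • u
              + ((4 - 5 * α) / (4 - 3 * α)) • ((2:ℝ)⁻¹ • (v₀ + v₁))) + v₁) - u‖ ^ 2)
        + (1 - α) * (‖((2 * α / (4 - 3 * α)) • u
              + ((4 - 5 * α) / (4 - 3 * α)) • ((2:ℝ)⁻¹ • (v₀ + v₁))) - v₀‖ ^ 2
          + ‖v₁ - ((2 * α / (4 - 3 * α)) • u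
              + ((4 - 5 * α) / (4 - 3 * α)) • ((2:ℝ)⁻¹ • (v₀ + v₁)))‖ ^ 2) =
      8 * α * (1 - α) / (4 - 3 * α) * ‖u - (2:ℝ)⁻¹ • (v₀ + v₁)‖ ^ 2
        + (1 / 2 - 3 * α / 8) * ‖v₁ - v₀‖ ^ 2) := by
  have h_pos : 0 < 4 - 3 * α := by linarith
  refine ⟨fun x => ?_, ?_⟩
  · rw [oat_objective_eq_min_add_sq h_pos.ne']
    exact le_add_of_nonneg_right (by positivity)
  · rw [oat_objective_eq_min_add_sq h_pos.ne', sub_self, norm_zero]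
    ring

/-- Minimization of the per-sample OAT-FM objective over vₜ, for 0<α<1. -/
theorem oat_per_sample_min
    (d : ℕ) (α : ℝ) (hα₀ : 0 < α) (hα₁ : α < 1)
    (v₀ v₁ u : EuclideanSpace ℝ (Fin d)) :
    (∀ x : EuclideanSpace ℝ (Fin d),
        8 * α * (1 - α) / (4 - 3 * α) * ‖u - (2:ℝ)⁻¹ • (v₀ + v₁)‖ ^ 2
          + (1 / 2 - 3 * α / 8) * ‖v₁ - v₀‖ ^ 2 ≤
        α * (‖(2:ℝ)⁻¹ • (v₀ + x) - u‖ ^ 2 + ‖(2:ℝ)⁻¹ • (x + v₁) - u‖ ^ 2)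
          + (1 - α) * (‖x - v₀‖ ^ 2 + ‖v₁ - x‖ ^ 2)) ∧
    (α * (‖(2:ℝ)⁻¹ • (v₀ + ((2 * α / (4 - 3 * α)) • u
              + ((4 - 5 * α) / (4 - 3 * α)) • ((2:ℝ)⁻¹ • (v₀ + v₁)))) - u‖ ^ 2
          + ‖(2:ℝ)⁻¹ • (((2 * α / (4 - 3 * α)) • u
              + ((4 - 5 * α) / (4 - 3 * α)) • ((2:ℝ)⁻¹ • (v₀ + v₁))) + v₁) - u‖ ^ 2)
        + (1 - α) * (‖((2 * α / (4 - 3 * α)) • u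
              + ((4 - 5 * α) / (4 - 3 * α)) • ((2:ℝ)⁻¹ • (v₀ + v₁))) - v₀‖ ^ 2
          + ‖v₁ - ((2 * α / (4 - 3 * α)) • u
              + ((4 - 5 * α) / (4 - 3 * α)) • ((2:ℝ)⁻¹ • (v₀ + v₁)))‖ ^ 2) =
      8 * α * (1 - α) / (4 - 3 * α) * ‖u - (2:ℝ)⁻¹ • (v₀ + v₁)‖ ^ 2
        + (1 / 2 - 3 * α / 8) * ‖v₁ - v₀‖ ^ 2) :=
  oat_per_sample_min_general d α hα₁ v₀ v₁ u
end

section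
/- Let α=2/3 and let v₀,v₁,u,x∈ℝ^d. Define L(x) = α(‖(v₀+x)/2−u‖² + ‖(x+v₁)/2−u‖²) + (1−α)(‖x−v₀‖² + ‖v₁−x‖²) and define the acceleration cost c²_A = 12‖u−(v₀+v₁)/2‖² + ‖v₁−v₀‖². Then for every x∈ℝ^d, L(x) ≥ (2/27)·c²_A. -/
/-!
Completing the square in `x`: with `m = (v₀ + v₁)/2`, the objective equals
`‖x - ((2/3) u + (1/3) m)‖² + (8/9) ‖u - m‖² + (1/4) ‖v₁ - v₀‖²`.
Dropping the square and using `8/9 = (2/27)·12` and `2/27 ≤ 1/4` gives the bound.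
-/

theorem objective_two_thirds_eq_sq_add {E : Type*} [NormedAddCommGroup E] [InnerProductSpace ℝ E]
    (v₀ v₁ u x : E) :
    (2 / 3) * (‖(2:ℝ)⁻¹ • (v₀ + x) - u‖ ^ 2 + ‖(2:ℝ)⁻¹ • (x + v₁) - u‖ ^ 2)
        + (1 - 2 / 3) * (‖x - v₀‖ ^ 2 + ‖v₁ - x‖ ^ 2) =
      ‖x - (2 / 3 : ℝ) • u - (6:ℝ)⁻¹ • (v₀ + v₁)‖ ^ 2
        + 8 / 9 * ‖u - (2:ℝ)⁻¹ • (v₀ + v₁)‖ ^ 2 + 1 / 4 * ‖v₁ - v₀‖ ^ 2 := by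
  simp only [← real_inner_self_eq_norm_sq, inner_sub_left, inner_sub_right, inner_add_left,
    inner_add_right, real_inner_smul_left, real_inner_smul_right,
    real_inner_comm x v₀, real_inner_comm x v₁, real_inner_comm x u,
    real_inner_comm v₀ v₁, real_inner_comm u v₀, real_inner_comm u v₁]
  ring

/-- With α = 2/3, the per-sample OAT-FM objective is bounded below by (2/27)·c²_A. -/
theorem per_sample_bound_two_thirds
    (d : ℕ) (v₀ v₁ u : EuclideanSpace ℝ (Fin d)) :
    ∀ x : EuclideanSpace ℝ (Fin d),
      (2 / 27) * (12 * ‖u - (2:ℝ)⁻¹ • (v₀ + v₁)‖ ^ 2 + ‖v₁ - v₀‖ ^ 2) ≤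
        (2 / 3) * (‖(2:ℝ)⁻¹ • (v₀ + x) - u‖ ^ 2 + ‖(2:ℝ)⁻¹ • (x + v₁) - u‖ ^ 2)
          + (1 - 2 / 3) * (‖x - v₀‖ ^ 2 + ‖v₁ - x‖ ^ 2) := by
  intro x
  rw [objective_two_thirds_eq_sq_add]
  have h_sq : 0 ≤ ‖x - (2 / 3 : ℝ) • u - (6:ℝ)⁻¹ • (v₀ + v₁)‖ ^ 2 := sq_nonneg _
  have h_gap : 0 ≤ ‖v₁ - v₀‖ ^ 2 := sq_nonneg _
  linarith
end
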